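/- arXiv:1004.5274 — 4 statements merged into one kernel-verified Lean document; each statement's English description precedes it below -/
import Mathlib

section
/- For each fixed channel i with snr_i > 0, the increment cost function c_i(r) = (2^{r+β} − 1)/snr_i is strictly increasing in r; consequently, in the greedy algorithm that at each step adds β bits to the channel minimizing (2^{r_i+β} − 1)/snr_i, the value max_i (2^{r_i} − 1)/snr_i after any step equals the minimum achievable value of max_i (2^{r_i} − 1)/snr_i over all allocations with the same total number of bits that are multiples of β. -/
lemma aux_mono (s : ℝ) (hs : 0 < s) : Monotone fun x : ℝ => ((2:ℝ)^x - 1)/s := by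
  intro a b hab
  have h2 : (2:ℝ)^a ≤ (2:ℝ)^b := Real.rpow_le_rpow_of_exponent_le one_le_two hab
  exact div_le_div_of_nonneg_right (by linarith) hs.le

/-- The increment cost `(2^{r+β}−1)/snr_i` is strictly increasing in `r`, and the
greedy algorithm adding `β` bits to the channel of minimal increment cost yields,
after each step, the minimum achievable value of `max_i (2^{r_i}−1)/snr_i` over all
allocations in `(βℕ)^n` with the same total number of bits. -/
theorem stmt_9 (n : ℕ) (hn : 0 < n) (snr : Fin n → ℝ) (hsnr : ∀ i, 0 < snr i)
    (β : ℝ) (hβ : 0 < β) :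
    (∀ i, StrictMono fun r : ℝ => ((2 : ℝ) ^ (r + β) - 1) / snr i) ∧
    (∀ g : ℕ → Fin n → ℝ,
      g 0 = 0 →
      (∀ k, ∃ j,
        (∀ i, ((2 : ℝ) ^ (g k j + β) - 1) / snr j ≤
              ((2 : ℝ) ^ (g k i + β) - 1) / snr i) ∧
        g (k + 1) j = g k j + β ∧ ∀ i, i ≠ j → g (k + 1) i = g k i) →
      ∀ k : ℕ, IsLeast
        {v : ℝ | ∃ r : Fin n → ℝ, (∀ i, ∃ m : ℕ, r i = β * m) ∧
          (∑ i, r i) = k * β ∧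
          v = Finset.univ.sup' ⟨⟨0, hn⟩, Finset.mem_univ _⟩
                (fun i => ((2 : ℝ) ^ (r i) - 1) / snr i)}
        (Finset.univ.sup' ⟨⟨0, hn⟩, Finset.mem_univ _⟩
          (fun i => ((2 : ℝ) ^ (g k i) - 1) / snr i))) := by
  have ne : (Finset.univ : Finset (Fin n)).Nonempty := ⟨⟨0, hn⟩, Finset.mem_univ _⟩
  constructor
  · intro i a b hab
    have h2 : (2:ℝ)^(a+β) < (2:ℝ)^(b+β) :=
      (Real.rpow_lt_rpow_left_iff one_lt_two).mpr (by linarith)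
    exact div_lt_div_of_pos_right (by linarith) (hsnr i)
  intro g hg0 hstep
  -- invariant: multiples of β
  have hmul : ∀ k i, ∃ m : ℕ, g k i = β * m := by
    intro k
    induction k with
    | zero => intro i; exact ⟨0, by simp [hg0]⟩
    | succ k ih =>
      intro i
      obtain ⟨j, _, hj1, hj2⟩ := hstep k
      by_cases hij : i = j
      · obtain ⟨m, hm⟩ := ih j
        exact ⟨m + 1, by subst hij; rw [hj1, hm]; push_cast; ring⟩
      · obtain ⟨m, hm⟩ := ih i
        exact ⟨m, by rw [hj2 i hij, hm]⟩
  have hnonneg : ∀ k i, 0 ≤ g k i := by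
    intro k i
    obtain ⟨m, hm⟩ := hmul k i
    rw [hm]; positivity
  -- invariant: sum
  have hsum : ∀ k, (∑ i, g k i) = k * β := by
    intro k
    induction k with
    | zero => simp [hg0]
    | succ k ih =>
      obtain ⟨j, _, hj1, hj2⟩ := hstep k
      have : (∑ i, g (k+1) i) = (∑ i, g k i) + β := by
        rw [← Finset.add_sum_erase _ _ (Finset.mem_univ j),
            ← Finset.add_sum_erase _ (g k) (Finset.mem_univ j), hj1]
        rw [Finset.sum_congr rfl (fun i hi => hj2 i (Finset.ne_of_mem_erase hi))]
        ring
      rw [this, ih]; push_cast; ring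
  intro k
  constructor
  · exact ⟨g k, hmul k, hsum k, rfl⟩
  -- lower bound, by induction on k
  induction k with
  | zero =>
    rintro v ⟨r, hr, hrsum, rfl⟩
    have hr0 : ∀ i, r i = 0 := by
      intro i
      have hnn : ∀ j ∈ Finset.univ, 0 ≤ r j := by
        intro j _; obtain ⟨m, hm⟩ := hr j; rw [hm]; positivity
      have := (Finset.sum_eq_zero_iff_of_nonneg hnn).mp (by simpa using hrsum)
      exact this i (Finset.mem_univ i)
    refine Finset.sup'_le ne _ fun i _ => ?_
    have : g 0 i = r i := by rw [hg0, hr0]; rfl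
    rw [this]
    exact Finset.le_sup' (fun i => ((2:ℝ)^(r i) - 1)/snr i) (Finset.mem_univ i)
  | succ k ih =>
    rintro v ⟨r, hr, hrsum, rfl⟩
    obtain ⟨j, hjmin, hj1, hj2⟩ := hstep k
    -- find i0 with r i0 ≥ g k i0 + β
    have hex : ∃ i0, g k i0 + β ≤ r i0 := by
      by_contra hc
      push_neg at hc
      have hle : ∀ i, r i ≤ g k i := by
        intro i
        obtain ⟨a, ha⟩ := hr i
        obtain ⟨b, hb⟩ := hmul k i
        have h1 : β * (a:ℝ) < β * ((b:ℝ) + 1) := by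
          have := hc i; rw [ha, hb] at this; linarith
        have h2 : (a:ℝ) < (b:ℝ) + 1 := (mul_lt_mul_iff_right₀ hβ).mp h1
        have h3 : a ≤ b := by
          have h4 : (a:ℝ) < ((b+1:ℕ):ℝ) := by push_cast; linarith
          have h5 : a < b + 1 := by exact_mod_cast h4
          omega
        rw [ha, hb]
        exact mul_le_mul_of_nonneg_left (by exact_mod_cast h3) hβ.le
      have hsle : (∑ i, r i) ≤ ∑ i, g k i := Finset.sum_le_sum (fun i _ => hle i)
      rw [hrsum, hsum k] at hsle
      push_cast at hsle
      nlinarith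
    obtain ⟨i0, hi0⟩ := hex
    -- r' = r with β removed at i0
    set r' : Fin n → ℝ := Function.update r i0 (r i0 - β) with hr'def
    have hr'mul : ∀ i, ∃ m : ℕ, r' i = β * m := by
      intro i
      by_cases h : i = i0
      · subst h
        obtain ⟨a, ha⟩ := hr i
        obtain ⟨b, hb⟩ := hmul k i
        have h1 : β * (b:ℝ) + β ≤ β * a := by rw [← ha, ← hb]; linarith [hi0]
        have hapos : 1 ≤ a := by
          by_contra hc
          push_neg at hc
          interval_cases a
          simp at h1
          nlinarith [hnonneg k i, hb]
        refine ⟨a - 1, ?_⟩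
        rw [hr'def, Function.update_self, ha]
        have : ((a - 1 : ℕ) : ℝ) = (a:ℝ) - 1 := by
          push_cast [hapos]; ring
        rw [this]; ring
      · obtain ⟨a, ha⟩ := hr i
        exact ⟨a, by rw [hr'def, Function.update_of_ne h, ha]⟩
    have hr'sum : (∑ i, r' i) = k * β := by
      have : (∑ i, r' i) = (∑ i, r i) - β := by
        rw [← Finset.add_sum_erase _ r' (Finset.mem_univ i0),
            ← Finset.add_sum_erase _ r (Finset.mem_univ i0)]
        rw [hr'def, Function.update_self]
        rw [Finset.sum_congr rfl (fun i hi =>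
          Function.update_of_ne (Finset.ne_of_mem_erase hi) _ _)]
        ring
      rw [this, hrsum]; push_cast; ring
    have hr'le : ∀ i, r' i ≤ r i := by
      intro i
      by_cases h : i = i0
      · subst h; rw [hr'def, Function.update_self]; linarith
      · rw [hr'def, Function.update_of_ne h]
    have hIH : Finset.univ.sup' ne (fun i => ((2:ℝ)^(g k i) - 1)/snr i) ≤
        Finset.univ.sup' ne (fun i => ((2:ℝ)^(r' i) - 1)/snr i) :=
      ih ⟨r', hr'mul, hr'sum, rfl⟩
    have hsup'le : Finset.univ.sup' ne (fun i => ((2:ℝ)^(r' i) - 1)/snr i) ≤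
        Finset.univ.sup' ne (fun i => ((2:ℝ)^(r i) - 1)/snr i) := by
      apply Finset.sup'_le
      intro i _
      exact le_trans (aux_mono (snr i) (hsnr i) (hr'le i))
        (Finset.le_sup' (fun i => ((2:ℝ)^(r i) - 1)/snr i) (Finset.mem_univ i))
    apply Finset.sup'_le
    intro i _
    by_cases h : i = j
    · subst h
      rw [hj1]
      calc ((2:ℝ)^(g k i + β) - 1)/snr i ≤ ((2:ℝ)^(g k i0 + β) - 1)/snr i0 := hjmin i0
        _ ≤ ((2:ℝ)^(r i0) - 1)/snr i0 := aux_mono (snr i0) (hsnr i0) hi0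
        _ ≤ _ := Finset.le_sup' (fun i => ((2:ℝ)^(r i) - 1)/snr i) (Finset.mem_univ i0)
    · rw [hj2 i h]
      exact le_trans (le_trans (Finset.le_sup'
        (fun i => ((2:ℝ)^(g k i) - 1)/snr i) (Finset.mem_univ i)) hIH) hsup'le
end

section
/- Greedy optimality for separable min-max objectives: let φ({r_i}) = max_i g_i(r_i) where each g_i : βℕ → ℝ is strictly increasing with g_i(0) = c₀ for a common constant c₀. Then the greedy algorithm, which starts from the all-zero allocation and at each step adds β to the coordinate j minimizing g_j(r_j + β), produces after k steps an allocation minimizing φ over all allocations in (βℕ)^n with total sum kβ. -/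
/-!
Invariant: after `k` greedy steps the objective is at most that of every allocation with
total at least `k`. Given `r` with total at least `k + 1`, some coordinate `i` has
`a i < r i`, so the value `g j (a j + 1)` chosen by the greedy step is at most
`g i (a i + 1) ≤ g i (r i)`; the other coordinates are unchanged and covered by induction.
-/

open Finset

variable {ι α : Type*} [Fintype ι] [LinearOrder α]

def IsGreedyStep (g : ι → ℕ → α) (a a' : ι → ℕ) : Prop :=
  ∃ j, (∀ i, g j (a j + 1) ≤ g i (a i + 1)) ∧ a' j = a j + 1 ∧ ∀ i, i ≠ j → a' i = a i

namespace IsGreedyStep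

variable {g : ι → ℕ → α} {a a' : ι → ℕ}

theorem sum_eq (h : IsGreedyStep g a a') : ∑ i, a' i = ∑ i, a i + 1 := by
  classical
  obtain ⟨j, -, hj, hother⟩ := h
  rw [← add_sum_erase _ _ (mem_univ j), ← add_sum_erase _ _ (mem_univ j), hj,
    sum_congr rfl fun i hi => hother i (ne_of_mem_erase hi)]
  ring

theorem sup'_le (hg : ∀ i, Monotone (g i)) (h : IsGreedyStep g a a')
    (hne : (univ : Finset ι).Nonempty) {r : ι → ℕ} (hsum : ∑ i, a i < ∑ i, r i)
    (hle : univ.sup' hne (fun i => g i (a i)) ≤ univ.sup' hne (fun i => g i (r i))) :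
    univ.sup' hne (fun i => g i (a' i)) ≤ univ.sup' hne (fun i => g i (r i)) := by
  obtain ⟨j, hmin, hj, hother⟩ := h
  obtain ⟨i₁, -, hi₁⟩ := exists_lt_of_sum_lt hsum
  refine Finset.sup'_le _ _ fun i _ => ?_
  by_cases hij : i = j
  · subst hij
    calc g i (a' i) = g i (a i + 1) := by rw [hj]
      _ ≤ g i₁ (a i₁ + 1) := hmin i₁
      _ ≤ g i₁ (r i₁) := hg i₁ hi₁
      _ ≤ _ := le_sup' (fun i => g i (r i)) (mem_univ i₁)
  · rw [hother i hij]
    exact (le_sup' (fun i => g i (a i)) (mem_univ i)).trans hle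

end IsGreedyStep

section Greedy

variable {g : ι → ℕ → α} {a : ℕ → ι → ℕ}

theorem sum_greedy (ha₀ : a 0 = 0) (hstep : ∀ k, IsGreedyStep g (a k) (a (k + 1))) (k : ℕ) :
    ∑ i, a k i = k := by
  induction k with
  | zero => simp [ha₀]
  | succ k ih => rw [(hstep k).sum_eq, ih]

theorem greedy_sup'_le (hg : ∀ i, Monotone (g i)) (ha₀ : a 0 = 0)
    (hstep : ∀ k, IsGreedyStep g (a k) (a (k + 1))) (hne : (univ : Finset ι).Nonempty)
    (k : ℕ) {r : ι → ℕ} (hr : k ≤ ∑ i, r i) :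
    univ.sup' hne (fun i => g i (a k i)) ≤ univ.sup' hne (fun i => g i (r i)) := by
  induction k with
  | zero =>
    simp only [ha₀, Pi.zero_apply]
    exact sup'_mono_fun fun i _ => hg i (Nat.zero_le _)
  | succ k ih =>
    refine (hstep k).sup'_le hg hne ?_ (ih (by omega))
    rw [sum_greedy ha₀ hstep]
    omega

end Greedy

theorem stmt_10_general (n : ℕ) (hn : 0 < n) (g : Fin n → ℕ → ℝ)
    (hmono : ∀ i, StrictMono (g i))
    (a : ℕ → Fin n → ℕ) (ha0 : a 0 = 0)
    (hstep : ∀ k, ∃ j,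
      (∀ i, g j (a k j + 1) ≤ g i (a k i + 1)) ∧
      a (k + 1) j = a k j + 1 ∧ ∀ i, i ≠ j → a (k + 1) i = a k i) :
    ∀ k : ℕ, IsLeast
      {v : ℝ | ∃ r : Fin n → ℕ, (∑ i, r i) = k ∧
        v = Finset.univ.sup' ⟨⟨0, hn⟩, Finset.mem_univ _⟩ (fun i => g i (r i))}
      (Finset.univ.sup' ⟨⟨0, hn⟩, Finset.mem_univ _⟩ (fun i => g i (a k i))) := by
  intro k
  refine ⟨⟨a k, sum_greedy ha0 hstep k, rfl⟩, ?_⟩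
  rintro v ⟨r, hr, rfl⟩
  exact greedy_sup'_le (fun i => (hmono i).monotone) ha0 hstep _ k hr.ge

/-- Greedy optimality for separable min-max objectives: with `g_i` strictly
increasing on `βℕ` (indexed here by the number of `β`-increments) and equal at `0`,
the greedy algorithm minimizes `max_i g_i(r_i)` after every step. -/
theorem stmt_10 (n : ℕ) (hn : 0 < n) (g : Fin n → ℕ → ℝ) (c0 : ℝ)
    (hmono : ∀ i, StrictMono (g i)) (h0 : ∀ i, g i 0 = c0)
    (a : ℕ → Fin n → ℕ) (ha0 : a 0 = 0)
    (hstep : ∀ k, ∃ j,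
      (∀ i, g j (a k j + 1) ≤ g i (a k i + 1)) ∧
      a (k + 1) j = a k j + 1 ∧ ∀ i, i ≠ j → a (k + 1) i = a k i) :
    ∀ k : ℕ, IsLeast
      {v : ℝ | ∃ r : Fin n → ℕ, (∑ i, r i) = k ∧
        v = Finset.univ.sup' ⟨⟨0, hn⟩, Finset.mem_univ _⟩ (fun i => g i (r i))}
      (Finset.univ.sup' ⟨⟨0, hn⟩, Finset.mem_univ _⟩ (fun i => g i (a k i))) :=
  stmt_10_general n hn g hmono a ha0 hstep
end

section
/- For the weighted-sum objective φ({r_i}) = Σ_i f_i(r_i) where each f_i : βℕ → ℝ is convex (discretely, i.e., the increments f_i(r+β) − f_i(r) are non-decreasing in r), the greedy algorithm that at each step adds β to the coordinate minimizing the increment f_j(r_j + β) − f_j(r_j) yields, after k steps, an allocation minimizing Σ_i f_i(r_i) over all allocations in (βℕ)^n summing to kβ. -/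
/-- Greedy optimality for separable discretely-convex sum objectives
(Fox / Levin-Campello): with `f_i` on `βℕ` (indexed by the number of
`β`-increments) having non-decreasing increments, the greedy algorithm that adds a
bit to the coordinate of minimal increment minimizes `Σ_i f_i(r_i)` after every step. -/
theorem stmt_11 (n : ℕ) (f : Fin n → ℕ → ℝ)
    (hconv : ∀ i r, f i (r + 1) - f i r ≤ f i (r + 2) - f i (r + 1))
    (a : ℕ → Fin n → ℕ) (ha0 : a 0 = 0)
    (hstep : ∀ k, ∃ j,
      (∀ i, f j (a k j + 1) - f j (a k j) ≤ f i (a k i + 1) - f i (a k i)) ∧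
      a (k + 1) j = a k j + 1 ∧ ∀ i, i ≠ j → a (k + 1) i = a k i) :
    ∀ k : ℕ, IsLeast
      {v : ℝ | ∃ r : Fin n → ℕ, (∑ i, r i) = k ∧ v = ∑ i, f i (r i)}
      (∑ i, f i (a k i)) := by
  have inc_mono : ∀ (i : Fin n) (t s : ℕ), t ≤ s →
      f i (t + 1) - f i t ≤ f i (s + 1) - f i s := by
    intro i t s hts
    induction s, hts using Nat.le_induction with
    | base => exact le_refl _
    | succ s hs ih => exact ih.trans (hconv i s)
  have hsum : ∀ k, ∑ i, a k i = k := by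
    intro k
    induction k with
    | zero => simp [ha0]
    | succ k ih =>
      obtain ⟨j, -, hj, hother⟩ := hstep k
      have h : ∀ i, a (k + 1) i = a k i + (if i = j then 1 else 0) := by
        intro i
        by_cases h : i = j
        · simp [h, hj]
        · simp [h, hother i h]
      rw [Finset.sum_congr rfl (fun i _ => h i), Finset.sum_add_distrib, ih]
      simp
  intro k
  induction k with
  | zero =>
    constructor
    · exact ⟨a 0, by simp [ha0], rfl⟩
    · rintro v ⟨r, hr, rfl⟩
      apply le_of_eq
      refine Finset.sum_congr rfl fun i _ => ?_
      have : r i = 0 := by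
        have := Finset.sum_eq_zero_iff.mp hr i (Finset.mem_univ i)
        omega
      rw [ha0, this]
      simp
  | succ k ih =>
    obtain ⟨j, hmin, hj, hother⟩ := hstep k
    have hstepsum : ∑ i, f i (a (k + 1) i)
        = ∑ i, f i (a k i) + (f j (a k j + 1) - f j (a k j)) := by
      have h1 : ∑ i, f i (a (k + 1) i) - ∑ i, f i (a k i)
          = ∑ i, (f i (a (k + 1) i) - f i (a k i)) := by
        rw [Finset.sum_sub_distrib]
      have h2 : ∑ i, (f i (a (k + 1) i) - f i (a k i))
          = f j (a k j + 1) - f j (a k j) := by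
        rw [Finset.sum_eq_single j]
        · rw [hj]
        · intro i _ hij; rw [hother i hij]; ring
        · simp
      have := h1.trans h2
      linarith
    constructor
    · exact ⟨a (k + 1), hsum (k + 1), rfl⟩
    · rintro v ⟨r, hr, rfl⟩
      have hex : ∃ i0, a k i0 < r i0 := by
        by_contra h
        push_neg at h
        have h2 : ∑ i, r i ≤ ∑ i, a k i := Finset.sum_le_sum fun i _ => h i
        rw [hsum k, hr] at h2
        omega
      obtain ⟨i0, hi0⟩ := hex
      set r' : Fin n → ℕ := Function.update r i0 (r i0 - 1) with hr'def
      have e1 : ∑ i, r i = ∑ i ∈ Finset.univ.erase i0, r i + r i0 :=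
        (Finset.sum_erase_add _ _ (Finset.mem_univ i0)).symm
      have e2 : ∑ i, r' i = ∑ i ∈ Finset.univ.erase i0, r i + (r i0 - 1) := by
        rw [← Finset.sum_erase_add _ _ (Finset.mem_univ i0)]
        congr 1
        · refine Finset.sum_congr rfl fun i hi => ?_
          rw [hr'def, Function.update_of_ne (Finset.ne_of_mem_erase hi)]
        · rw [hr'def, Function.update_self]
      have hr'sum : ∑ i, r' i = k := by omega
      have key : ∑ i, f i (a k i) ≤ ∑ i, f i (r' i) := ih.2 ⟨r', hr'sum, rfl⟩
      have e3 : ∑ i, f i (r i) = ∑ i ∈ Finset.univ.erase i0, f i (r i) + f i0 (r i0) :=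
        (Finset.sum_erase_add _ _ (Finset.mem_univ i0)).symm
      have e4 : ∑ i, f i (r' i)
          = ∑ i ∈ Finset.univ.erase i0, f i (r i) + f i0 (r i0 - 1) := by
        rw [← Finset.sum_erase_add _ _ (Finset.mem_univ i0)]
        congr 1
        · refine Finset.sum_congr rfl fun i hi => ?_
          rw [hr'def, Function.update_of_ne (Finset.ne_of_mem_erase hi)]
        · rw [hr'def, Function.update_self]
      have g1 : f j (a k j + 1) - f j (a k j) ≤ f i0 (a k i0 + 1) - f i0 (a k i0) :=
        hmin i0
      have g2 : f i0 (a k i0 + 1) - f i0 (a k i0)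
          ≤ f i0 (r i0 - 1 + 1) - f i0 (r i0 - 1) :=
        inc_mono i0 _ _ (by omega)
      have hri0 : r i0 - 1 + 1 = r i0 := by omega
      rw [hri0] at g2
      rw [hstepsum]
      linarith
end

section
/- For the square-QAM approximate BER function ber(r, snr) = (2/r)(2 − 2·2^{−r/2})·erfc(√(3·snr/(2(2^r − 1)))) restricted to even integers r ≥ 2, the weighted value r·ber(r, snr) = 2(2 − 2^{1−r/2})·erfc(√(3 snr/(2(2^r−1)))) is strictly increasing in r for fixed snr > 0. -/
/-- For square QAM (even `r ≥ 2`), the weighted approximate BER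
`r·ber(r,snr) = 2(2 − 2^{1−r/2})·erfc(√(3·snr/(2(2^r − 1))))` is strictly
increasing in `r` for fixed `snr > 0`, with `erfc` strictly decreasing and positive. -/
theorem stmt_19 (snr : ℝ) (hsnr : 0 < snr)
    (erfc : ℝ → ℝ) (herfc : StrictAnti erfc) (hpos : ∀ x, 0 < erfc x) :
    ∀ r s : ℕ, Even r → Even s → 2 ≤ r → r < s →
      2 * (2 - (2 : ℝ) ^ (1 - (r : ℝ) / 2)) *
          erfc (Real.sqrt (3 * snr / (2 * ((2 : ℝ) ^ (r : ℝ) - 1)))) <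
        2 * (2 - (2 : ℝ) ^ (1 - (s : ℝ) / 2)) *
          erfc (Real.sqrt (3 * snr / (2 * ((2 : ℝ) ^ (s : ℝ) - 1)))) := by
  intro r s _ _ hr hrs
  have h2 : (1 : ℝ) < 2 := one_lt_two
  have hrR : (2 : ℝ) ≤ (r : ℝ) := by exact_mod_cast hr
  have hrsR : (r : ℝ) < (s : ℝ) := by exact_mod_cast hrs
  -- Coefficient facts
  have hcoefr : (2 : ℝ) ^ (1 - (r : ℝ) / 2) ≤ 1 := by
    have : (1 : ℝ) - (r : ℝ) / 2 ≤ 0 := by linarith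
    calc (2 : ℝ) ^ (1 - (r : ℝ) / 2) ≤ 2 ^ (0 : ℝ) :=
          Real.rpow_le_rpow_of_exponent_le (le_of_lt h2) this
      _ = 1 := Real.rpow_zero 2
  have hApos : 0 < 2 * (2 - (2 : ℝ) ^ (1 - (r : ℝ) / 2)) := by linarith
  have hAlt : 2 * (2 - (2 : ℝ) ^ (1 - (r : ℝ) / 2)) <
      2 * (2 - (2 : ℝ) ^ (1 - (s : ℝ) / 2)) := by
    have : (2 : ℝ) ^ (1 - (s : ℝ) / 2) < 2 ^ (1 - (r : ℝ) / 2) :=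
      Real.rpow_lt_rpow_of_exponent_lt h2 (by linarith)
    linarith
  -- erfc argument facts
  have hbr : (1 : ℝ) < (2 : ℝ) ^ (r : ℝ) := by
    calc (1 : ℝ) = 2 ^ (0 : ℝ) := (Real.rpow_zero 2).symm
      _ < 2 ^ (r : ℝ) := Real.rpow_lt_rpow_of_exponent_lt h2 (by linarith)
  have hbs : (2 : ℝ) ^ (r : ℝ) < 2 ^ (s : ℝ) :=
    Real.rpow_lt_rpow_of_exponent_lt h2 hrsR
  have hdr : 0 < 2 * ((2 : ℝ) ^ (r : ℝ) - 1) := by linarith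
  have hds : 0 < 2 * ((2 : ℝ) ^ (s : ℝ) - 1) := by linarith
  have hnum : 0 < 3 * snr := by linarith
  have harg : 3 * snr / (2 * ((2 : ℝ) ^ (s : ℝ) - 1)) <
      3 * snr / (2 * ((2 : ℝ) ^ (r : ℝ) - 1)) :=
    div_lt_div_of_pos_left hnum hdr (by linarith)
  have hsqrt : Real.sqrt (3 * snr / (2 * ((2 : ℝ) ^ (s : ℝ) - 1))) <
      Real.sqrt (3 * snr / (2 * ((2 : ℝ) ^ (r : ℝ) - 1))) :=
    Real.sqrt_lt_sqrt (le_of_lt (div_pos hnum hds)) harg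
  have hBlt : erfc (Real.sqrt (3 * snr / (2 * ((2 : ℝ) ^ (r : ℝ) - 1)))) <
      erfc (Real.sqrt (3 * snr / (2 * ((2 : ℝ) ^ (s : ℝ) - 1)))) := herfc hsqrt
  have hBpos := hpos (Real.sqrt (3 * snr / (2 * ((2 : ℝ) ^ (r : ℝ) - 1))))
  calc 2 * (2 - (2 : ℝ) ^ (1 - (r : ℝ) / 2)) *
        erfc (Real.sqrt (3 * snr / (2 * ((2 : ℝ) ^ (r : ℝ) - 1))))
      < 2 * (2 - (2 : ℝ) ^ (1 - (s : ℝ) / 2)) *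
        erfc (Real.sqrt (3 * snr / (2 * ((2 : ℝ) ^ (s : ℝ) - 1)))) := by
        apply mul_lt_mul' (le_of_lt hAlt) hBlt (le_of_lt hBpos) (by linarith)
end
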